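/- arXiv:2501.05073 — 4 statements merged into one kernel-verified Lean document; each statement's English description precedes it below -/
import Mathlib

section
/- Let n ≥ 2, let A : ℝⁿ → ℝⁿ be an invertible linear map with det A > 0, and let u ∈ ℝⁿ be a unit vector. Then 1/H_O(A) ≤ H_I(A)^{1/(1−n)} ≤ T(A,u) ≤ H_O(A)^{1/(n−1)} ≤ H_I(A). -/
/-!
In terms of the singular values `σ₀ ≥ ⋯ ≥ σₙ₋₁` of `A` we have `‖A‖ = σ₀`, `l(A) = σₙ₋₁` and
`|det A| = ∏ σᵢ`, hence `‖A‖ l(A)ⁿ⁻¹ ≤ |det A| ≤ l(A) ‖A‖ⁿ⁻¹`. These two bounds are equivalent to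
`H_O ≤ H_Iⁿ⁻¹` and `H_I ≤ H_Oⁿ⁻¹`, which give the two outer inequalities. The two middle ones
follow from `l(A) ≤ |A u| ≤ 𝓛(A,u) ≤ ‖A‖`: take `h = u` in `𝓛`, and use Cauchy–Schwarz.
-/

open Metric

/-- `l(A) = min_{|h|=1} |A h|`. -/
noncomputable def minNorm (n : ℕ)
    (A : EuclideanSpace ℝ (Fin n) →L[ℝ] EuclideanSpace ℝ (Fin n)) : ℝ :=
  sInf ((fun h => ‖A h‖) '' sphere (0 : EuclideanSpace ℝ (Fin n)) 1)

/-- Inner dilatation coefficient `H_I(A) = |det A| / l(A)^n`. -/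
noncomputable def innerDil (n : ℕ)
    (A : EuclideanSpace ℝ (Fin n) →L[ℝ] EuclideanSpace ℝ (Fin n)) : ℝ :=
  |LinearMap.det (A : EuclideanSpace ℝ (Fin n) →ₗ[ℝ] EuclideanSpace ℝ (Fin n))| /
    (minNorm n A) ^ n

/-- Outer dilatation coefficient `H_O(A) = ‖A‖^n / |det A|`. -/
noncomputable def outerDil (n : ℕ)
    (A : EuclideanSpace ℝ (Fin n) →L[ℝ] EuclideanSpace ℝ (Fin n)) : ℝ :=
  ‖A‖ ^ n /
    |LinearMap.det (A : EuclideanSpace ℝ (Fin n) →ₗ[ℝ] EuclideanSpace ℝ (Fin n))|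

/-- `𝓛(A,u) = max { |A h| · |h ⬝ u| : |h| = 1 }`. -/
noncomputable def bigLDir (n : ℕ)
    (A : EuclideanSpace ℝ (Fin n) →L[ℝ] EuclideanSpace ℝ (Fin n))
    (u : EuclideanSpace ℝ (Fin n)) : ℝ :=
  sSup {r : ℝ | ∃ h : EuclideanSpace ℝ (Fin n),
    ‖h‖ = 1 ∧ r = ‖A h‖ * abs ((inner ℝ h u : ℝ))}

/-- Normal dilatation `T(A,u) = (𝓛(A,u)^n / det A)^(1/(n-1))` (for `det A > 0`). -/
noncomputable def normDil (n : ℕ)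
    (A : EuclideanSpace ℝ (Fin n) →L[ℝ] EuclideanSpace ℝ (Fin n))
    (u : EuclideanSpace ℝ (Fin n)) : ℝ :=
  ((bigLDir n A u) ^ n /
    LinearMap.det (A : EuclideanSpace ℝ (Fin n) →ₗ[ℝ] EuclideanSpace ℝ (Fin n)))
    ^ (1 / ((n : ℝ) - 1))

open Module

namespace LinearMap

variable {E F : Type*} [NormedAddCommGroup E] [InnerProductSpace ℝ E] [FiniteDimensional ℝ E]
  [NormedAddCommGroup F] [InnerProductSpace ℝ F] [FiniteDimensional ℝ F] (T : E →ₗ[ℝ] F)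

theorem norm_apply_sq_eq_sum_singularValues (x : E) :
    ‖T x‖ ^ 2 = ∑ i : Fin (finrank ℝ E), T.singularValues i ^ 2 *
      inner ℝ (T.isSymmetric_adjoint_comp_self.eigenvectorBasis rfl i) x ^ 2 := by
  have hS := T.isSymmetric_adjoint_comp_self
  rw [← real_inner_self_eq_norm_sq, ← adjoint_inner_right,
    ← (hS.eigenvectorBasis rfl).sum_inner_mul_inner]
  refine Finset.sum_congr rfl fun i _ => ?_
  rw [← comp_apply, ← hS, hS.apply_eigenvectorBasis, ← T.sq_singularValues_fin rfl,
    real_inner_smul_left, real_inner_comm, RCLike.ofReal_real_eq_id, id_eq]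
  ring

theorem exists_norm_apply_eq_singularValues {i : ℕ} (hi : i < finrank ℝ E) :
    ∃ x : E, ‖x‖ = 1 ∧ ‖T x‖ = T.singularValues i := by
  have hS := T.isSymmetric_adjoint_comp_self
  refine ⟨hS.eigenvectorBasis rfl ⟨i, hi⟩, (hS.eigenvectorBasis rfl).orthonormal.1 _, ?_⟩
  rw [← sq_eq_sq₀ (norm_nonneg _) (T.singularValues_nonneg i), T.sq_singularValues_of_lt rfl hi,
    ← real_inner_self_eq_norm_sq, ← adjoint_inner_right, ← comp_apply, hS.apply_eigenvectorBasis,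
    real_inner_smul_right, real_inner_self_eq_norm_sq, (hS.eigenvectorBasis rfl).orthonormal.1]
  simp

theorem norm_apply_le_singularValues_zero_mul (x : E) :
    ‖T x‖ ≤ T.singularValues 0 * ‖x‖ := by
  refine (pow_le_pow_iff_left₀ (norm_nonneg _)
    (mul_nonneg (T.singularValues_nonneg 0) (norm_nonneg x)) two_ne_zero).1 ?_
  rw [norm_apply_sq_eq_sum_singularValues, mul_pow,
    ← (T.isSymmetric_adjoint_comp_self.eigenvectorBasis rfl).sum_sq_inner_right, Finset.mul_sum]
  gcongr with i
  · exact T.singularValues_nonneg i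
  · exact T.singularValues_antitone (Nat.zero_le i)

theorem singularValues_finrank_sub_one_mul_le_norm_apply (x : E) :
    T.singularValues (finrank ℝ E - 1) * ‖x‖ ≤ ‖T x‖ := by
  refine (pow_le_pow_iff_left₀ (mul_nonneg (T.singularValues_nonneg _) (norm_nonneg x))
    (norm_nonneg _) two_ne_zero).1 ?_
  rw [norm_apply_sq_eq_sum_singularValues, mul_pow,
    ← (T.isSymmetric_adjoint_comp_self.eigenvectorBasis rfl).sum_sq_inner_right, Finset.mul_sum]
  gcongr with i
  · exact T.singularValues_nonneg _
  · exact T.singularValues_antitone (by omega)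

theorem abs_det_eq_prod_singularValues (T : E →ₗ[ℝ] E) :
    |T.det| = ∏ i ∈ Finset.range (finrank ℝ E), T.singularValues i := by
  rw [← normDet_eq_abs_det, normDet_eq_prod_singularValues]

end LinearMap

theorem Antitone.mul_pow_le_prod_range {f : ℕ → ℝ} (hf : Antitone f) (hf0 : ∀ i, 0 ≤ f i)
    (m : ℕ) : f 0 * f m ^ m ≤ ∏ i ∈ Finset.range (m + 1), f i := by
  rw [Finset.prod_range_succ', mul_comm (f 0)]
  refine mul_le_mul_of_nonneg_right ?_ (hf0 0)
  calc f m ^ m = ∏ _i ∈ Finset.range m, f m := by rw [Finset.prod_const, Finset.card_range]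
    _ ≤ ∏ i ∈ Finset.range m, f (i + 1) :=
      Finset.prod_le_prod (fun _ _ => hf0 m) fun i hi => hf (Finset.mem_range.1 hi)

theorem Antitone.prod_range_le_mul_pow {f : ℕ → ℝ} (hf : Antitone f) (hf0 : ∀ i, 0 ≤ f i)
    (m : ℕ) : ∏ i ∈ Finset.range (m + 1), f i ≤ f m * f 0 ^ m := by
  rw [Finset.prod_range_succ, mul_comm]
  refine mul_le_mul_of_nonneg_left ?_ (hf0 m)
  calc ∏ i ∈ Finset.range m, f i ≤ ∏ _i ∈ Finset.range m, f 0 :=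
      Finset.prod_le_prod (fun i _ => hf0 i) fun i _ => hf (Nat.zero_le i)
    _ = f 0 ^ m := by rw [Finset.prod_const, Finset.card_range]

namespace ContinuousLinearMap

variable {E F : Type*} [NormedAddCommGroup E] [InnerProductSpace ℝ E] [FiniteDimensional ℝ E]
  [NormedAddCommGroup F] [InnerProductSpace ℝ F] [FiniteDimensional ℝ F]

theorem opNorm_eq_singularValues_zero [Nontrivial E] (A : E →L[ℝ] F) :
    ‖A‖ = (A : E →ₗ[ℝ] F).singularValues 0 := by
  refine le_antisymm (A.opNorm_le_bound (LinearMap.singularValues_nonneg _ 0)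
    (A : E →ₗ[ℝ] F).norm_apply_le_singularValues_zero_mul) ?_
  obtain ⟨x, hx, hAx⟩ := (A : E →ₗ[ℝ] F).exists_norm_apply_eq_singularValues finrank_pos
  exact hAx ▸ A.unit_le_opNorm x hx.le

theorem opNorm_mul_pow_le_abs_det [Nontrivial E] (A : E →L[ℝ] E) :
    ‖A‖ * (A : E →ₗ[ℝ] E).singularValues (finrank ℝ E - 1) ^ (finrank ℝ E - 1) ≤
      |(A : E →ₗ[ℝ] E).det| := by
  obtain ⟨m, hm⟩ : ∃ m, finrank ℝ E = m + 1 := Nat.exists_eq_add_one.2 finrank_pos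
  rw [opNorm_eq_singularValues_zero, LinearMap.abs_det_eq_prod_singularValues, hm,
    Nat.add_sub_cancel]
  exact LinearMap.singularValues_antitone _ |>.mul_pow_le_prod_range
    (LinearMap.singularValues_nonneg _) m

theorem abs_det_le_mul_opNorm_pow [Nontrivial E] (A : E →L[ℝ] E) :
    |(A : E →ₗ[ℝ] E).det| ≤
      (A : E →ₗ[ℝ] E).singularValues (finrank ℝ E - 1) * ‖A‖ ^ (finrank ℝ E - 1) := by
  obtain ⟨m, hm⟩ : ∃ m, finrank ℝ E = m + 1 := Nat.exists_eq_add_one.2 finrank_pos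
  rw [opNorm_eq_singularValues_zero, LinearMap.abs_det_eq_prod_singularValues, hm,
    Nat.add_sub_cancel]
  exact LinearMap.singularValues_antitone _ |>.prod_range_le_mul_pow
    (LinearMap.singularValues_nonneg _) m

end ContinuousLinearMap

theorem ContinuousLinearMap.norm_apply_mul_abs_inner_le_opNorm {E F : Type*}
    [NormedAddCommGroup E] [InnerProductSpace ℝ E] [SeminormedAddCommGroup F] [NormedSpace ℝ F]
    (A : E →L[ℝ] F) {h u : E} (hh : ‖h‖ = 1) (hu : ‖u‖ = 1) :
    ‖A h‖ * |inner ℝ h u| ≤ ‖A‖ := by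
  calc ‖A h‖ * |inner ℝ h u| ≤ ‖A‖ * 1 := by
        gcongr
        · exact A.unit_le_opNorm h hh.le
        · simpa [hh, hu] using abs_real_inner_le_norm h u
    _ = ‖A‖ := mul_one _

section Dilatation

variable {n : ℕ} {A : EuclideanSpace ℝ (Fin n) →L[ℝ] EuclideanSpace ℝ (Fin n)}

theorem minNorm_le_norm_apply {u : EuclideanSpace ℝ (Fin n)} (hu : ‖u‖ = 1) :
    minNorm n A ≤ ‖A u‖ :=
  csInf_le ⟨0, by rintro _ ⟨x, -, rfl⟩; exact norm_nonneg _⟩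
    ⟨u, mem_sphere_zero_iff_norm.2 hu, rfl⟩

theorem minNorm_eq_singularValues (hn : 0 < n) :
    minNorm n A = (A : EuclideanSpace ℝ (Fin n) →ₗ[ℝ] EuclideanSpace ℝ (Fin n)).singularValues
      (n - 1) := by
  have hrank : Module.finrank ℝ (EuclideanSpace ℝ (Fin n)) = n := finrank_euclideanSpace_fin
  refine IsLeast.csInf_eq ⟨?_, ?_⟩
  · obtain ⟨x, hx, hAx⟩ :=
      A.toLinearMap.exists_norm_apply_eq_singularValues (i := n - 1) (by omega)
    exact ⟨x, mem_sphere_zero_iff_norm.2 hx, hAx⟩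
  · rintro _ ⟨x, hx, rfl⟩
    simpa [hrank, mem_sphere_zero_iff_norm.1 hx] using
      A.toLinearMap.singularValues_finrank_sub_one_mul_le_norm_apply x

theorem opNorm_mul_minNorm_pow_le_abs_det (hn : 0 < n) :
    ‖A‖ * minNorm n A ^ (n - 1) ≤
      |LinearMap.det (A : EuclideanSpace ℝ (Fin n) →ₗ[ℝ] EuclideanSpace ℝ (Fin n))| := by
  have : Nonempty (Fin n) := ⟨⟨0, hn⟩⟩
  simpa only [minNorm_eq_singularValues hn, finrank_euclideanSpace_fin] using
    A.opNorm_mul_pow_le_abs_det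

theorem abs_det_le_minNorm_mul_opNorm_pow (hn : 0 < n) :
    |LinearMap.det (A : EuclideanSpace ℝ (Fin n) →ₗ[ℝ] EuclideanSpace ℝ (Fin n))| ≤
      minNorm n A * ‖A‖ ^ (n - 1) := by
  have : Nonempty (Fin n) := ⟨⟨0, hn⟩⟩
  simpa only [minNorm_eq_singularValues hn, finrank_euclideanSpace_fin] using
    A.abs_det_le_mul_opNorm_pow

theorem minNorm_pos (hn : 0 < n)
    (hdet : LinearMap.det (A : EuclideanSpace ℝ (Fin n) →ₗ[ℝ] EuclideanSpace ℝ (Fin n)) ≠ 0) :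
    0 < minNorm n A :=
  pos_of_mul_pos_left ((abs_pos.2 hdet).trans_le (abs_det_le_minNorm_mul_opNorm_pow hn))
    (by positivity)

theorem innerDil_le_outerDil_pow (hn : 0 < n)
    (hdet : LinearMap.det (A : EuclideanSpace ℝ (Fin n) →ₗ[ℝ] EuclideanSpace ℝ (Fin n)) ≠ 0) :
    innerDil n A ≤ outerDil n A ^ (n - 1) := by
  have hl := minNorm_pos hn hdet
  have hd := abs_pos.2 hdet
  have hup := abs_det_le_minNorm_mul_opNorm_pow (A := A) hn
  obtain ⟨m, rfl⟩ := Nat.exists_eq_add_one.2 hn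
  rw [Nat.add_sub_cancel] at hup ⊢
  rw [innerDil, outerDil, div_pow, div_le_div_iff₀ (by positivity) (by positivity), ← pow_succ']
  calc _ ≤ (minNorm (m + 1) A * ‖A‖ ^ m) ^ (m + 1) := pow_le_pow_left₀ hd.le hup _
    _ = _ := by ring

theorem outerDil_le_innerDil_pow (hn : 0 < n)
    (hdet : LinearMap.det (A : EuclideanSpace ℝ (Fin n) →ₗ[ℝ] EuclideanSpace ℝ (Fin n)) ≠ 0) :
    outerDil n A ≤ innerDil n A ^ (n - 1) := by
  have hl := minNorm_pos hn hdet
  have hd := abs_pos.2 hdet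
  have hlow := opNorm_mul_minNorm_pow_le_abs_det (A := A) hn
  obtain ⟨m, rfl⟩ := Nat.exists_eq_add_one.2 hn
  rw [Nat.add_sub_cancel] at hlow ⊢
  rw [innerDil, outerDil, div_pow, div_le_div_iff₀ (by positivity) (by positivity), ← pow_succ]
  calc _ = (‖A‖ * minNorm (m + 1) A ^ m) ^ (m + 1) := by ring
    _ ≤ _ := pow_le_pow_left₀ (by positivity) hlow _

theorem norm_apply_le_bigLDir {u : EuclideanSpace ℝ (Fin n)} (hu : ‖u‖ = 1) :
    ‖A u‖ ≤ bigLDir n A u :=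
  le_csSup ⟨‖A‖, by rintro _ ⟨h, hh, rfl⟩; exact A.norm_apply_mul_abs_inner_le_opNorm hh hu⟩
    ⟨u, hu, by simp [hu]⟩

theorem bigLDir_le_opNorm {u : EuclideanSpace ℝ (Fin n)} (hu : ‖u‖ = 1) :
    bigLDir n A u ≤ ‖A‖ :=
  csSup_le ⟨_, u, hu, rfl⟩ fun _ ⟨_, hh, hr⟩ => hr ▸ A.norm_apply_mul_abs_inner_le_opNorm hh hu

theorem innerDil_rpow_le_normDil (hn : 0 < n)
    (hdet : 0 < LinearMap.det (A : EuclideanSpace ℝ (Fin n) →ₗ[ℝ] EuclideanSpace ℝ (Fin n)))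
    {u : EuclideanSpace ℝ (Fin n)} (hu : ‖u‖ = 1) :
    innerDil n A ^ (1 / (1 - (n : ℝ))) ≤ normDil n A u := by
  have hl := minNorm_pos hn hdet.ne'
  have hexp : (0 : ℝ) ≤ 1 / ((n : ℝ) - 1) := one_div_nonneg.2 (sub_nonneg.2 (by exact_mod_cast hn))
  rw [innerDil, normDil, abs_of_pos hdet, ← neg_sub, one_div_neg_eq_neg_one_div,
    Real.rpow_neg (by positivity), ← Real.inv_rpow (by positivity), inv_div]
  gcongr
  exact (minNorm_le_norm_apply hu).trans (norm_apply_le_bigLDir hu)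

theorem normDil_le_outerDil_rpow (hn : 0 < n)
    (hdet : 0 < LinearMap.det (A : EuclideanSpace ℝ (Fin n) →ₗ[ℝ] EuclideanSpace ℝ (Fin n)))
    {u : EuclideanSpace ℝ (Fin n)} (hu : ‖u‖ = 1) :
    normDil n A u ≤ outerDil n A ^ (1 / ((n : ℝ) - 1)) := by
  have hexp : (0 : ℝ) ≤ 1 / ((n : ℝ) - 1) := one_div_nonneg.2 (sub_nonneg.2 (by exact_mod_cast hn))
  have hL : 0 ≤ bigLDir n A u := (norm_nonneg _).trans (norm_apply_le_bigLDir hu)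
  rw [normDil, outerDil, abs_of_pos hdet]
  gcongr
  exact bigLDir_le_opNorm hu

end Dilatation

theorem normal_dilatation_bounds_general (n : ℕ) (hn : 2 ≤ n)
    (A : EuclideanSpace ℝ (Fin n) →L[ℝ] EuclideanSpace ℝ (Fin n))
    (hdet : 0 < LinearMap.det
      (A : EuclideanSpace ℝ (Fin n) →ₗ[ℝ] EuclideanSpace ℝ (Fin n)))
    (u : EuclideanSpace ℝ (Fin n)) (hu : ‖u‖ = 1) :
    1 / outerDil n A ≤ (innerDil n A) ^ (1 / (1 - (n : ℝ))) ∧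
    (innerDil n A) ^ (1 / (1 - (n : ℝ))) ≤ normDil n A u ∧
    normDil n A u ≤ (outerDil n A) ^ (1 / ((n : ℝ) - 1)) ∧
    (outerDil n A) ^ (1 / ((n : ℝ) - 1)) ≤ innerDil n A := by
  have hn₀ : 0 < n := by omega
  have hm : (0 : ℝ) < (n : ℝ) - 1 := by
    have : (2 : ℝ) ≤ n := by exact_mod_cast hn
    linarith
  have hI : 0 < innerDil n A :=
    div_pos (abs_pos.2 hdet.ne') (pow_pos (minNorm_pos hn₀ hdet.ne') n)
  have hO : 0 ≤ outerDil n A := by unfold outerDil; positivity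
  have hIO := innerDil_le_outerDil_pow hn₀ hdet.ne'
  have hOI := outerDil_le_innerDil_pow hn₀ hdet.ne'
  rw [← Real.rpow_natCast, Nat.cast_pred hn₀] at hIO hOI
  refine ⟨?_, innerDil_rpow_le_normDil hn₀ hdet hu, normDil_le_outerDil_rpow hn₀ hdet hu, ?_⟩
  · rw [← neg_sub, one_div_neg_eq_neg_one_div, Real.rpow_neg hI.le, one_div, one_div]
    exact inv_anti₀ (by positivity) ((Real.rpow_inv_le_iff_of_pos hI.le hO hm).2 hIO)
  · rw [one_div]
    exact (Real.rpow_inv_le_iff_of_pos hO hI.le hm).2 hOI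

theorem normal_dilatation_bounds (n : ℕ) (hn : 2 ≤ n)
    (A : EuclideanSpace ℝ (Fin n) →L[ℝ] EuclideanSpace ℝ (Fin n))
    (hA : Function.Bijective A)
    (hdet : 0 < LinearMap.det
      (A : EuclideanSpace ℝ (Fin n) →ₗ[ℝ] EuclideanSpace ℝ (Fin n)))
    (u : EuclideanSpace ℝ (Fin n)) (hu : ‖u‖ = 1) :
    1 / outerDil n A ≤ (innerDil n A) ^ (1 / (1 - (n : ℝ))) ∧
    (innerDil n A) ^ (1 / (1 - (n : ℝ))) ≤ normDil n A u ∧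
    normDil n A u ≤ (outerDil n A) ^ (1 / ((n : ℝ) - 1)) ∧
    (outerDil n A) ^ (1 / ((n : ℝ) - 1)) ≤ innerDil n A :=
  normal_dilatation_bounds_general n hn A hdet u hu
end

section
/- Let n ≥ 2 and let H be a dominating factor with parameter t₀, and let t₁ ≥ max{t₀, 1}. Then ∫_{t₁}^{∞} H(t) t^{−n/(n−1)} dt = +∞ if and only if ∫_{H(t₁)}^{∞} (H⁻¹(τ))^{−1/(n−1)} dτ = +∞. (That is, H is of divergence type if and only if the integral of (H⁻¹(τ))^{−1/(n−1)} over [H(t₁), ∞) diverges.) -/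
/-!
Since `α = -n/(n-1) < -1`, `t ↦ t^α` is integrable on `(t₁, ∞)`, so `H t` may be replaced by
`H t - H t₁ ≥ 0`. The layer-cake formula for the measure `t^α dt` on `(t₁, ∞)`, on which the
superlevel sets of `H` are the half-lines `[H⁻¹ τ, ∞)`, gives
`∫_{t₁}^∞ (H t - H t₁) t^α dt = ∫_{H t₁}^∞ ∫_{H⁻¹ τ}^∞ t^α dt dτ`, and the inner integral is
`(n-1) (H⁻¹ τ)^{α+1}` with `α + 1 = -1/(n-1)`.
-/

open Filter

/-- `H : [0,∞) → ℝ` is a dominating factor with parameter `t₀` if `H` is continuous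
and strictly increasing on `[t₀,∞)`, constant (equal to `H t₀`) on `[0,t₀]`, and
`t ↦ e^{H t}` is convex on `[0,∞)`. -/
def DominatingFactor (H : ℝ → ℝ) (t₀ : ℝ) : Prop :=
  0 ≤ t₀ ∧ ContinuousOn H (Set.Ici t₀) ∧ StrictMonoOn H (Set.Ici t₀) ∧
    (∀ t ∈ Set.Icc (0 : ℝ) t₀, H t = H t₀) ∧
    ConvexOn ℝ (Set.Ici (0 : ℝ)) (fun t => Real.exp (H t))

open MeasureTheory Set
open scoped ENNReal Topology

lemma Filter.tendsto_atTop_iff_of_tendsto_sub {α : Type*} {l : Filter α} {f g : α → ℝ} {c : ℝ}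
    (h : Tendsto (fun x => f x - g x) l (𝓝 c)) :
    Tendsto f l atTop ↔ Tendsto g l atTop :=
  ⟨fun hf => by simpa using hf.atTop_add h.neg, fun hg => by simpa using hg.atTop_add h⟩

lemma tendsto_intervalIntegral_atTop_iff_lintegral_eq_top {f : ℝ → ℝ} {a : ℝ}
    (hf : ∀ T, IntegrableOn f (Ioc a T)) (hf_nonneg : ∀ t > a, 0 ≤ f t) :
    Tendsto (fun T => ∫ t in a..T, f t) atTop atTop ↔
      ∫⁻ t in Ioi a, ENNReal.ofReal (f t) = ∞ := by
  have hlim : Tendsto (fun T => ∫⁻ t in Ioc a T, ENNReal.ofReal (f t)) atTop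
      (𝓝 (∫⁻ t in Ioi a, ENNReal.ofReal (f t))) := by
    simp_rw [← withDensity_apply' _ (Ioc a _), ← withDensity_apply' _ (Ioi a),
      ← iUnion_Ioc_right a]
    exact tendsto_measure_iUnion_atTop fun _ _ h => Ioc_subset_Ioc_right h
  have hofReal : ∀ᶠ T in atTop,
      ENNReal.ofReal (∫ t in a..T, f t) = ∫⁻ t in Ioc a T, ENNReal.ofReal (f t) := by
    filter_upwards [eventually_ge_atTop a] with T hT
    rw [intervalIntegral.integral_of_le hT]
    exact ofReal_integral_eq_lintegral_ofReal (hf T)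
      ((ae_restrict_iff' measurableSet_Ioc).2 (ae_of_all _ fun t ht => hf_nonneg t ht.1))
  rw [← ENNReal.tendsto_ofReal_nhds_top, tendsto_congr' hofReal]
  exact ⟨fun h => tendsto_nhds_unique hlim h, fun h => h ▸ hlim⟩

lemma lintegral_Ici_ofReal_rpow {α c : ℝ} (hα : α < -1) (hc : 0 < c) :
    ∫⁻ t in Ici c, ENNReal.ofReal (t ^ α) =
      ENNReal.ofReal (c ^ (α + 1)) / ENNReal.ofReal (-(α + 1)) := by
  rw [← setLIntegral_congr Ioi_ae_eq_Ici, ← ofReal_integral_eq_lintegral_ofReal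
    (integrableOn_Ioi_rpow_of_lt hα hc), integral_Ioi_rpow_of_lt hα hc,
    ← ENNReal.ofReal_div_of_pos (by linarith), neg_div, div_neg]
  exact (ae_restrict_iff' measurableSet_Ioi).2
    (ae_of_all _ fun t ht => Real.rpow_nonneg (hc.trans ht).le _)

lemma lintegral_Ioi_ofReal_sub_mul_eq {H Hinv : ℝ → ℝ} {a : ℝ}
    (hcont : ContinuousOn H (Ici a)) (hmono : StrictMonoOn H (Ici a))
    (hinv : ∀ τ > H a, Hinv τ ∈ Ici a ∧ H (Hinv τ) = τ) {w : ℝ → ℝ≥0∞} (hw : Measurable w) :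
    ∫⁻ t in Ioi a, ENNReal.ofReal (H t - H a) * w t =
      ∫⁻ τ in Ioi (H a), ∫⁻ t in Ici (Hinv τ), w t := by
  set μ := (volume.restrict (Ioi a)).withDensity w
  have hμ : μ ≪ volume.restrict (Ioi a) := withDensity_absolutelyContinuous _ _
  have hmeas : AEMeasurable (fun t => H t - H a) (volume.restrict (Ioi a)) :=
    ((hcont.mono Ioi_subset_Ici_self).aemeasurable measurableSet_Ioi).sub_const _
  have hnonneg : ∀ᵐ t ∂volume.restrict (Ioi a), 0 ≤ H t - H a :=
    (ae_restrict_iff' measurableSet_Ioi).2 (ae_of_all _ fun t ht =>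
      sub_nonneg.2 (hmono.monotoneOn self_mem_Ici (mem_Ici.2 ht.le) ht.le))
  have hsuperlevel : ∀ τ > H a, {t | τ ≤ H t} ∩ Ioi a = Ici (Hinv τ) := by
    intro τ hτ
    obtain ⟨hmem, hHτ⟩ := hinv τ hτ
    have ha : a < Hinv τ := (hmono.lt_iff_lt self_mem_Ici hmem).1 (by rwa [hHτ])
    ext t
    simp only [mem_inter_iff, mem_ofPred_eq, mem_Ioi, mem_Ici]
    refine ⟨fun ⟨ht, hat⟩ => ?_, fun ht => ⟨?_, ha.trans_le ht⟩⟩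
    · rwa [← hHτ, hmono.le_iff_le hmem (mem_Ici.2 hat.le)] at ht
    · rwa [← hHτ, hmono.le_iff_le hmem (mem_Ici.2 (ha.le.trans ht))]
  calc ∫⁻ t in Ioi a, ENNReal.ofReal (H t - H a) * w t
      = ∫⁻ t, ENNReal.ofReal (H t - H a) ∂μ := by
        rw [lintegral_withDensity_eq_lintegral_mul₀ hw.aemeasurable hmeas.ennreal_ofReal]
        simp only [Pi.mul_apply, mul_comm]
    _ = ∫⁻ s in Ioi 0, μ {t | s ≤ H t - H a} :=
        lintegral_eq_lintegral_meas_le μ (hμ.ae_le hnonneg) (hmeas.mono_ac hμ)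
    _ = ∫⁻ s in Ioi 0, ∫⁻ t in Ici (Hinv (H a + s)), w t := by
        refine setLIntegral_congr_fun measurableSet_Ioi fun s hs => ?_
        rw [withDensity_apply', Measure.restrict_restrict' measurableSet_Ioi,
          ← hsuperlevel _ (lt_add_of_pos_right _ hs)]
        simp only [le_sub_iff_add_le']
    _ = ∫⁻ τ in Ioi (H a), ∫⁻ t in Ici (Hinv τ), w t := by
        rw [(measurePreserving_add_left volume (H a)).setLIntegral_comp_emb
          (measurableEmbedding_addLeft (H a)) (fun τ => ∫⁻ t in Ici (Hinv τ), w t),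
          image_const_add_Ioi, add_zero]

lemma lintegral_Ioi_ofReal_sub_mul_rpow_eq {H Hinv : ℝ → ℝ} {a α : ℝ} (ha : 0 < a)
    (hα : α < -1) (hcont : ContinuousOn H (Ici a)) (hmono : StrictMonoOn H (Ici a))
    (hinv : ∀ τ > H a, Hinv τ ∈ Ici a ∧ H (Hinv τ) = τ) :
    ∫⁻ t in Ioi a, ENNReal.ofReal ((H t - H a) * t ^ α) =
      (∫⁻ τ in Ioi (H a), ENNReal.ofReal (Hinv τ ^ (α + 1))) / ENNReal.ofReal (-(α + 1)) := by
  calc ∫⁻ t in Ioi a, ENNReal.ofReal ((H t - H a) * t ^ α)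
      = ∫⁻ t in Ioi a, ENNReal.ofReal (H t - H a) * ENNReal.ofReal (t ^ α) :=
        setLIntegral_congr_fun measurableSet_Ioi fun t ht =>
          ENNReal.ofReal_mul' (Real.rpow_nonneg (ha.trans ht).le _)
    _ = ∫⁻ τ in Ioi (H a), ∫⁻ t in Ici (Hinv τ), ENNReal.ofReal (t ^ α) :=
        lintegral_Ioi_ofReal_sub_mul_eq hcont hmono hinv (by fun_prop)
    _ = ∫⁻ τ in Ioi (H a), ENNReal.ofReal (Hinv τ ^ (α + 1)) / ENNReal.ofReal (-(α + 1)) :=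
        setLIntegral_congr_fun measurableSet_Ioi fun τ hτ =>
          lintegral_Ici_ofReal_rpow hα (ha.trans_le (hinv τ hτ).1)
    _ = _ := by
        simp_rw [div_eq_mul_inv]
        refine lintegral_mul_const' _ _ (ENNReal.inv_ne_top.2 ?_)
        simp only [ne_eq, ENNReal.ofReal_eq_zero, not_le]
        linarith

theorem tendsto_intervalIntegral_mul_rpow_atTop_iff {H Hinv : ℝ → ℝ} {a α : ℝ} (ha : 0 < a)
    (hα : α < -1) (hcont : ContinuousOn H (Ici a)) (hmono : StrictMonoOn H (Ici a))
    (hinv : ∀ τ ∈ Ici (H a), Hinv τ ∈ Ici a ∧ H (Hinv τ) = τ) :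
    Tendsto (fun T => ∫ t in a..T, H t * t ^ α) atTop atTop ↔
      Tendsto (fun T => ∫ τ in (H a)..T, Hinv τ ^ (α + 1)) atTop atTop := by
  have hpos : ∀ t ∈ Ici a, 0 < t := fun t ht => ha.trans_le ht
  have hrpow_cont : ContinuousOn (fun t : ℝ => t ^ α) (Ici a) :=
    continuousOn_id.rpow_const fun t ht => Or.inl (hpos t ht).ne'
  have hdiff_cont : ContinuousOn (fun t => (H t - H a) * t ^ α) (Ici a) :=
    (hcont.sub continuousOn_const).mul hrpow_cont
  have hdiff_nonneg : ∀ t > a, 0 ≤ (H t - H a) * t ^ α := fun t ht =>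
    mul_nonneg (sub_nonneg.2 (hmono.monotoneOn self_mem_Ici (mem_Ici.2 ht.le) ht.le))
      (Real.rpow_nonneg (hpos t (mem_Ici.2 ht.le)).le _)
  have hHinv_anti : AntitoneOn (fun τ => Hinv τ ^ (α + 1)) (Ici (H a)) := by
    intro τ hτ τ' hτ' hle
    refine Real.rpow_le_rpow_of_nonpos (hpos _ (hinv τ hτ).1) ?_ (by linarith)
    rwa [← hmono.le_iff_le (hinv τ hτ).1 (hinv τ' hτ').1, (hinv τ hτ).2, (hinv τ' hτ').2]
  have hcorrection : Tendsto (fun T => (∫ t in a..T, H t * t ^ α) -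
      ∫ t in a..T, (H t - H a) * t ^ α) atTop (𝓝 (H a * ∫ t in Ioi a, t ^ α)) := by
    refine ((intervalIntegral_tendsto_integral_Ioi a (integrableOn_Ioi_rpow_of_lt hα ha)
      tendsto_id).const_mul (H a)).congr' ?_
    filter_upwards [eventually_ge_atTop a] with T hT
    have hsub : uIcc a T ⊆ Ici a := by rw [uIcc_of_le hT]; exact Icc_subset_Ici_self
    have hprod_cont : ContinuousOn (fun t => H t * t ^ α) (Ici a) := hcont.mul hrpow_cont
    rw [id, ← intervalIntegral.integral_const_mul, ← intervalIntegral.integral_sub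
      (hprod_cont.mono hsub).intervalIntegrable (hdiff_cont.mono hsub).intervalIntegrable]
    exact intervalIntegral.integral_congr fun t _ => by ring
  rw [tendsto_atTop_iff_of_tendsto_sub hcorrection,
    tendsto_intervalIntegral_atTop_iff_lintegral_eq_top (fun T =>
      (hdiff_cont.mono Icc_subset_Ici_self).integrableOn_Icc.mono_set Ioc_subset_Icc_self)
      hdiff_nonneg,
    tendsto_intervalIntegral_atTop_iff_lintegral_eq_top (fun T =>
      (hHinv_anti.mono Icc_subset_Ici_self).integrableOn_isCompact isCompact_Icc
        |>.mono_set Ioc_subset_Icc_self)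
      (fun τ hτ => Real.rpow_nonneg (hpos _ (hinv τ (mem_Ici.2 hτ.le)).1).le _),
    lintegral_Ioi_ofReal_sub_mul_rpow_eq ha hα hcont hmono fun τ hτ => hinv τ (mem_Ici.2 hτ.le),
    ENNReal.div_eq_top]
  simp only [ENNReal.ofReal_eq_zero, ENNReal.ofReal_ne_top, ne_eq, not_false_eq_true, and_true]
  exact ⟨fun h => h.resolve_left fun h' => not_le.2 (by linarith) h'.2, Or.inr⟩

theorem divergence_type_iff_general (n : ℕ) (hn : 2 ≤ n)
    (H : ℝ → ℝ) (t₀ : ℝ) (hH : DominatingFactor H t₀)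
    (Hinv : ℝ → ℝ)
    (hinv₂ : ∀ τ ∈ Set.Ici (H t₀), Hinv τ ∈ Set.Ici t₀ ∧ H (Hinv τ) = τ)
    (t₁ : ℝ) (ht₁ : max t₀ 1 ≤ t₁) :
    Tendsto (fun T => ∫ t in t₁..T, H t * t ^ (-(n : ℝ) / ((n : ℝ) - 1)))
        atTop atTop ↔
    Tendsto (fun T => ∫ τ in (H t₁)..T, (Hinv τ) ^ (-1 / ((n : ℝ) - 1)))
        atTop atTop := by
  obtain ⟨-, hcont, hmono, -, -⟩ := hH
  have ht₀₁ : t₀ ≤ t₁ := (le_max_left _ _).trans ht₁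
  have hn' : (2 : ℝ) ≤ n := by exact_mod_cast hn
  have hexp : -(n : ℝ) / ((n : ℝ) - 1) + 1 = -1 / ((n : ℝ) - 1) := by
    field_simp [show (n : ℝ) - 1 ≠ 0 by linarith]
    ring
  rw [← hexp]
  refine tendsto_intervalIntegral_mul_rpow_atTop_iff (by linarith [le_max_right t₀ 1])
    (by rw [div_lt_iff₀ (by linarith)]; linarith) (hcont.mono (Ici_subset_Ici.2 ht₀₁))
    (hmono.mono (Ici_subset_Ici.2 ht₀₁)) fun τ hτ => ?_
  obtain ⟨hmem, hHτ⟩ := hinv₂ τ (hmono.monotoneOn self_mem_Ici (mem_Ici.2 ht₀₁) ht₀₁ |>.trans hτ)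
  exact ⟨(hmono.le_iff_le (mem_Ici.2 ht₀₁) hmem).1 (by rwa [hHτ]), hHτ⟩

theorem divergence_type_iff (n : ℕ) (hn : 2 ≤ n)
    (H : ℝ → ℝ) (t₀ : ℝ) (hH : DominatingFactor H t₀)
    (Hinv : ℝ → ℝ)
    (hinv₁ : ∀ t ∈ Set.Ici t₀, Hinv (H t) = t)
    (hinv₂ : ∀ τ ∈ Set.Ici (H t₀), Hinv τ ∈ Set.Ici t₀ ∧ H (Hinv τ) = τ)
    (t₁ : ℝ) (ht₁ : max t₀ 1 ≤ t₁) :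
    Tendsto (fun T => ∫ t in t₁..T, H t * t ^ (-(n : ℝ) / ((n : ℝ) - 1)))
        atTop atTop ↔
    Tendsto (fun T => ∫ τ in (H t₁)..T, (Hinv τ) ^ (-1 / ((n : ℝ) - 1)))
        atTop atTop :=
  divergence_type_iff_general n hn H t₀ hH Hinv hinv₂ t₁ ht₁
end

section
/- Let n ≥ 2, let t ∈ ∂Hⁿ (i.e. tₙ = 0), let 0 < r < R < ∞, and let g : Hⁿ → [0,∞) be measurable and integrable on S(t; 0, R). Define ω(s) = (2/(Ωₙ sⁿ)) ∫_{S(t;0,s)} (g(x) − 1) dmₙ(x) for 0 < s ≤ R and P = (2/(ωₙ₋₁ log(R/r))) ∫_{S(t;r,R)} g(x)/|x − t|ⁿ dmₙ(x). Then (P − 1)·log(R/r) = (ω(R) − ω(r))/n + ∫_r^R ω(s)/s ds. -/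
/-!
Let `F(s)` be the integral of `h` over the half ball `S(t; 0, s)`. Writing
`|x - t|⁻ⁿ = R⁻ⁿ + n ∫_{|x-t|}^R s⁻ⁿ⁻¹ ds` and exchanging the order of integration amounts to an
integration by parts against `F`:
`∫_{S(t;r,R)} h |x - t|⁻ⁿ = F(R)/Rⁿ - F(r)/rⁿ + n ∫_r^R F(s)/sⁿ⁺¹ ds`.
For `h = g - 1` we have `F(s) = Ωₙ sⁿ ω(s) / 2`. For `h = 1` we have `F(s) = Ωₙ sⁿ / 2`, because
the point reflection in `t` swaps the two halves of a ball, and so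
`∫_{S(t;r,R)} |x - t|⁻ⁿ = n Ωₙ log(R/r) / 2`. Adding the two cases gives the identity.
-/

open MeasureTheory Metric

/-- The semiring `S(x₀; r, R) = {x ∈ Hⁿ : r ≤ |x − x₀| ≤ R}` in the upper half
space `Hⁿ = {x : xₙ > 0}`, where `x₀ ∈ ∂Hⁿ`. -/
def semiring (n : ℕ) (hn : 2 ≤ n) (x₀ : EuclideanSpace ℝ (Fin n)) (r R : ℝ) :
    Set (EuclideanSpace ℝ (Fin n)) :=
  {x | 0 < x ⟨n - 1, by omega⟩ ∧ r ≤ ‖x - x₀‖ ∧ ‖x - x₀‖ ≤ R}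

open Set

section RadialLayers

variable {E : Type*} [PseudoMetricSpace E] {S : Set E} {c : E} {r R : ℝ} {h : E → ℝ}
  {ψ : ℝ → ℝ}

noncomputable def radialKernel (S : Set E) (c : E) (r R : ℝ) (h : E → ℝ) (ψ : ℝ → ℝ) :
    E × ℝ → ℝ :=
  {p | dist p.1 c ≤ p.2}.indicator fun p =>
    (S ∩ closedBall c R).indicator h p.1 * (Icc r R).indicator ψ p.2

theorem integral_radialKernel_left (x : E) :
    ∫ s, radialKernel S c r R h ψ (x, s) =
      (S ∩ closedBall c R).indicator
        (fun x => h x * ∫ s in Icc (max (dist x c) r) R, ψ s) x := by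
  by_cases hx : x ∈ S ∩ closedBall c R
  · have hIci : Ici (dist x c) ∩ Icc r R = Icc (max (dist x c) r) R := by
      ext s
      simp only [mem_inter_iff, mem_Ici, mem_Icc, max_le_iff]
      tauto
    change ∫ s, (Ici (dist x c)).indicator
      (fun s => (S ∩ closedBall c R).indicator h x * (Icc r R).indicator ψ s) s = _
    rw [integral_indicator measurableSet_Ici, indicator_of_mem hx, indicator_of_mem hx,
      integral_const_mul, setIntegral_indicator measurableSet_Icc, hIci]
  · simp [radialKernel, indicator_apply, hx]

variable [MeasurableSpace E] [OpensMeasurableSpace E] {μ : Measure E}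

theorem integral_radialKernel_right (hS : MeasurableSet S) (s : ℝ) :
    ∫ x, radialKernel S c r R h ψ (x, s) ∂μ =
      (Icc r R).indicator (fun s => ψ s * ∫ x in S ∩ closedBall c s, h x ∂μ) s := by
  by_cases hs : s ∈ Icc r R
  · have hball : closedBall c s ∩ (S ∩ closedBall c R) = S ∩ closedBall c s := by
      rw [inter_left_comm, inter_eq_left.2 (closedBall_subset_closedBall hs.2)]
    change ∫ x, (closedBall c s).indicator
      (fun x => (S ∩ closedBall c R).indicator h x * (Icc r R).indicator ψ s) x ∂μ = _
    rw [integral_indicator measurableSet_closedBall, indicator_of_mem hs, indicator_of_mem hs,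
      integral_mul_const, setIntegral_indicator (hS.inter measurableSet_closedBall), hball,
      mul_comm]
  · rw [mem_Icc] at hs
    simp [radialKernel, indicator_apply, hs]

theorem integrable_radialKernel [SFinite μ] (hS : MeasurableSet S)
    (hh : IntegrableOn h (S ∩ closedBall c R) μ) (hψ : IntegrableOn ψ (Icc r R)) :
    Integrable (radialKernel S c r R h ψ) (μ.prod volume) :=
  (((integrable_indicator_iff (hS.inter measurableSet_closedBall)).2 hh).mul_prod
    ((integrable_indicator_iff measurableSet_Icc).2 hψ)).indicator
    (measurableSet_le (continuous_fst.dist continuous_const).measurable measurable_snd)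

theorem integrableOn_mul_setIntegral_Icc_max_dist [SFinite μ] (hS : MeasurableSet S)
    (hh : IntegrableOn h (S ∩ closedBall c R) μ) (hψ : IntegrableOn ψ (Icc r R)) :
    IntegrableOn (fun x => h x * ∫ s in Icc (max (dist x c) r) R, ψ s)
      (S ∩ closedBall c R) μ := by
  rw [← integrable_indicator_iff (hS.inter measurableSet_closedBall),
    ← funext integral_radialKernel_left]
  exact (integrable_radialKernel hS hh hψ).integral_prod_left

theorem setIntegral_mul_setIntegral_Icc_max_dist [SFinite μ] (hS : MeasurableSet S)
    (hh : IntegrableOn h (S ∩ closedBall c R) μ) (hψ : IntegrableOn ψ (Icc r R)) :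
    ∫ x in S ∩ closedBall c R, h x * (∫ s in Icc (max (dist x c) r) R, ψ s) ∂μ =
      ∫ s in Icc r R, ψ s * ∫ x in S ∩ closedBall c s, h x ∂μ := by
  have hswap := integral_integral_swap (f := fun x s => radialKernel S c r R h ψ (x, s))
    (integrable_radialKernel hS hh hψ)
  simp only [integral_radialKernel_left, integral_radialKernel_right hS] at hswap
  rwa [integral_indicator (hS.inter measurableSet_closedBall),
    integral_indicator measurableSet_Icc] at hswap

theorem setIntegral_inter_closedBall_eq_add (hS : MeasurableSet S)
    (hsph : μ (sphere c r) = 0) (hrR : r ≤ R) (hh : IntegrableOn h (S ∩ closedBall c R) μ) :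
    ∫ x in S ∩ closedBall c R, h x ∂μ =
      (∫ x in S ∩ closedBall c r, h x ∂μ) + ∫ x in S ∩ (closedBall c R \ ball c r), h x ∂μ := by
  have hunion : S ∩ closedBall c R = S ∩ closedBall c r ∪ S ∩ (closedBall c R \ ball c r) := by
    rw [← inter_union_distrib_left,
      union_sdiff_cancel' ball_subset_closedBall (closedBall_subset_closedBall hrR)]
  have hdisj : AEDisjoint μ (S ∩ closedBall c r) (S ∩ (closedBall c R \ ball c r)) := by
    refine measure_mono_null (fun x ⟨⟨_, hxr⟩, _, _, hx⟩ => ?_) hsph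
    rw [mem_closedBall] at hxr
    rw [mem_ball, not_lt] at hx
    exact mem_sphere.2 (le_antisymm hxr hx)
  rw [hunion] at hh ⊢
  exact setIntegral_union₀ hdisj
    (hS.inter (measurableSet_closedBall.diff measurableSet_ball)).nullMeasurableSet
    (hh.mono_set subset_union_left) (hh.mono_set subset_union_right)

theorem setIntegral_mul_comp_dist_eq [SFinite μ] (hS : MeasurableSet S)
    (hsph : μ (sphere c r) = 0) (hrR : r ≤ R) (hh : IntegrableOn h (S ∩ closedBall c R) μ)
    {φ φ' : ℝ → ℝ} (hφ : ∀ s ∈ Icc r R, HasDerivAt φ (φ' s) s)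
    (hφ' : IntegrableOn φ' (Icc r R)) :
    ∫ x in S ∩ (closedBall c R \ ball c r), h x * φ (dist x c) ∂μ =
      φ R * (∫ x in S ∩ closedBall c R, h x ∂μ) - φ r * (∫ x in S ∩ closedBall c r, h x ∂μ) -
        ∫ s in r..R, φ' s * ∫ x in S ∩ closedBall c s, h x ∂μ := by
  -- Fubini applies to `h x * φ (max (dist x c) r)` on the whole ball, where it is
  -- `φ R * h x` minus a layer integral of `φ'`; on the inner ball it is `φ r * h x`.
  have hB : MeasurableSet (S ∩ closedBall c R) := hS.inter measurableSet_closedBall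
  have hftc : ∀ x ∈ S ∩ closedBall c R, h x * φ (max (dist x c) r) =
      φ R * h x - h x * ∫ s in Icc (max (dist x c) r) R, φ' s := by
    intro x hx
    have hmax : max (dist x c) r ≤ R := max_le hx.2 hrR
    have hsub : uIcc (max (dist x c) r) R ⊆ Icc r R := by
      rw [uIcc_of_le hmax]
      exact Icc_subset_Icc_left (le_max_right _ _)
    rw [integral_Icc_eq_integral_Ioc, ← intervalIntegral.integral_of_le hmax,
      intervalIntegral.integral_eq_sub_of_hasDerivAt (fun s hs => hφ s (hsub hs))
        (hφ'.mono_set hsub).intervalIntegrable]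
    ring
  have hlayer := integrableOn_mul_setIntegral_Icc_max_dist hS hh hφ'
  have hint : IntegrableOn (fun x => h x * φ (max (dist x c) r)) (S ∩ closedBall c R) μ :=
    IntegrableOn.congr_fun ((hh.const_mul (φ R)).sub hlayer) (fun x hx => (hftc x hx).symm) hB
  have hinner : ∫ x in S ∩ closedBall c r, h x * φ (max (dist x c) r) ∂μ =
      φ r * ∫ x in S ∩ closedBall c r, h x ∂μ := by
    rw [← integral_const_mul]
    refine setIntegral_congr_fun (hS.inter measurableSet_closedBall) fun x hx => ?_
    rw [max_eq_right (mem_closedBall.1 hx.2), mul_comm]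
  have houter : ∫ x in S ∩ (closedBall c R \ ball c r), h x * φ (max (dist x c) r) ∂μ =
      ∫ x in S ∩ (closedBall c R \ ball c r), h x * φ (dist x c) ∂μ := by
    refine setIntegral_congr_fun (hS.inter (measurableSet_closedBall.diff measurableSet_ball))
      fun x hx => ?_
    rw [max_eq_left (not_lt.1 hx.2.2)]
  have hsplit := setIntegral_inter_closedBall_eq_add hS hsph hrR hint
  rw [setIntegral_congr_fun hB hftc, integral_sub (hh.const_mul _) hlayer, integral_const_mul,
    setIntegral_mul_setIntegral_Icc_max_dist hS hh hφ', hinner, houter,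
    integral_Icc_eq_integral_Ioc, ← intervalIntegral.integral_of_le hrR] at hsplit
  linarith

theorem setIntegral_div_dist_pow_eq [SFinite μ] (n : ℕ) (hS : MeasurableSet S) (hr : 0 < r)
    (hsph : μ (sphere c r) = 0) (hrR : r ≤ R) (hh : IntegrableOn h (S ∩ closedBall c R) μ) :
    ∫ x in S ∩ (closedBall c R \ ball c r), h x / dist x c ^ n ∂μ =
      (∫ x in S ∩ closedBall c R, h x ∂μ) / R ^ n - (∫ x in S ∩ closedBall c r, h x ∂μ) / r ^ n +
        n * ∫ s in r..R, (∫ x in S ∩ closedBall c s, h x ∂μ) / s ^ (n + 1) := by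
  have hderiv : ∀ s ∈ Icc r R, HasDerivAt (fun s => (s ^ n)⁻¹) (-(n / s ^ (n + 1))) s := by
    intro s hs
    have hzpow := hasDerivAt_zpow (-(n : ℤ)) s (Or.inl (hr.trans_le hs.1).ne')
    simp only [zpow_neg, zpow_natCast] at hzpow
    refine hzpow.congr_deriv ?_
    rw [show -(n : ℤ) - 1 = -((n + 1 : ℕ) : ℤ) by push_cast; ring, zpow_neg, zpow_natCast]
    push_cast
    ring
  have hderiv_int : IntegrableOn (fun s : ℝ => -(n / s ^ (n + 1))) (Icc r R) :=
    (continuousOn_const.div (continuousOn_pow _)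
      fun s hs => pow_ne_zero _ (hr.trans_le hs.1).ne').neg.integrableOn_Icc
  simp_rw [div_eq_mul_inv _ (dist _ c ^ n)]
  rw [setIntegral_mul_comp_dist_eq hS hsph hrR hh hderiv hderiv_int]
  have hintegrand : ∀ s : ℝ, -(n / s ^ (n + 1)) * ∫ x in S ∩ closedBall c s, h x ∂μ =
      -(n * ((∫ x in S ∩ closedBall c s, h x ∂μ) / s ^ (n + 1))) := fun s => by ring
  simp_rw [hintegrand, intervalIntegral.integral_neg, intervalIntegral.integral_const_mul]
  ring

theorem IntegrableOn.div_dist_pow (hS : MeasurableSet S) (hr : 0 < r)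
    (hh : IntegrableOn h (S ∩ (closedBall c R \ ball c r)) μ) (n : ℕ) :
    IntegrableOn (fun x => h x / dist x c ^ n) (S ∩ (closedBall c R \ ball c r)) μ := by
  have hA : MeasurableSet (S ∩ (closedBall c R \ ball c r)) :=
    hS.inter (measurableSet_closedBall.diff measurableSet_ball)
  have hbound : ∀ x ∈ S ∩ (closedBall c R \ ball c r), ‖(dist x c ^ n)⁻¹‖ ≤ (r ^ n)⁻¹ := by
    intro x hx
    rw [norm_inv, norm_pow, Real.norm_of_nonneg dist_nonneg]
    exact inv_anti₀ (pow_pos hr n) (pow_le_pow_left₀ hr.le (not_lt.1 hx.2.2) n)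
  simp_rw [div_eq_inv_mul]
  exact hh.bdd_mul
    ((continuous_id.dist continuous_const).measurable.pow_const n).inv.aestronglyMeasurable
    (ae_restrict_of_forall_mem hA hbound)

end RadialLayers

section HalfSpace

variable {E : Type*} [NormedAddCommGroup E] [NormedSpace ℝ E] [MeasurableSpace E]
  [BorelSpace E] [FiniteDimensional ℝ E] (μ : Measure E) [μ.IsAddHaarMeasure]
  {ℓ : E →L[ℝ] ℝ} {c : E}

theorem addHaar_halfSpace_inter_closedBall (hℓ : ℓ ≠ 0) (hc : ℓ c = 0) (s : ℝ) :
    μ ({x | 0 < ℓ x} ∩ closedBall c s) = μ (closedBall c s) / 2 := by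
  have hP : MeasurableSet ({x | 0 < ℓ x} ∩ closedBall c s) :=
    (measurableSet_lt measurable_const ℓ.measurable).inter measurableSet_closedBall
  have hN : MeasurableSet ({x | ℓ x < 0} ∩ closedBall c s) :=
    (measurableSet_lt ℓ.measurable measurable_const).inter measurableSet_closedBall
  have hker : μ (LinearMap.ker (ℓ : E →ₗ[ℝ] ℝ) : Set E) = 0 := by
    refine Measure.addHaar_submodule μ _ fun htop => hℓ ?_
    ext x
    exact LinearMap.congr_fun (LinearMap.ker_eq_top.1 htop) x
  have hrefl : μ ({x | ℓ x < 0} ∩ closedBall c s) = μ ({x | 0 < ℓ x} ∩ closedBall c s) := by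
    have hT : MeasurePreserving (fun x => c + c + -x) μ μ :=
      (measurePreserving_add_left μ (c + c)).comp (Measure.measurePreserving_neg μ)
    rw [← hT.measure_preimage hP.nullMeasurableSet]
    congr 1
    ext x
    have hreflect : c + c + -x - c = -(x - c) := by abel
    simp [hc, dist_eq_norm, hreflect, norm_sub_rev c x]
  have hsplit : μ (closedBall c s) =
      μ ({x | 0 < ℓ x} ∩ closedBall c s) + μ ({x | ℓ x < 0} ∩ closedBall c s) := by
    rw [← measure_union _ hN, ← measure_sdiff_null hker]
    · congr 1
      ext x
      simp only [mem_sdiff, mem_union, mem_inter_iff, mem_ofPred_eq, SetLike.mem_coe,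
        LinearMap.mem_ker, ContinuousLinearMap.coe_coe]
      rw [← ne_eq, ne_iff_lt_or_gt]
      tauto
    · exact disjoint_left.2 fun x hx hx' => (lt_asymm hx.1 : ¬ℓ x < 0) hx'.1
  rw [ENNReal.eq_div_iff two_ne_zero ENNReal.ofNat_ne_top, hsplit, hrefl, two_mul]

theorem addHaar_real_halfSpace_inter_closedBall (hℓ : ℓ ≠ 0) (hc : ℓ c = 0) {s : ℝ}
    (hs : 0 ≤ s) :
    μ.real ({x | 0 < ℓ x} ∩ closedBall c s) =
      s ^ Module.finrank ℝ E * μ.real (ball 0 1) / 2 := by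
  rw [measureReal_def, addHaar_halfSpace_inter_closedBall μ hℓ hc,
    Measure.addHaar_closedBall μ c hs, ENNReal.toReal_div, ENNReal.toReal_mul,
    ENNReal.toReal_ofReal (by positivity), measureReal_def]
  norm_num

theorem setIntegral_one_div_dist_pow_finrank_halfSpace (hℓ : ℓ ≠ 0) (hc : ℓ c = 0)
    {r R : ℝ} (hr : 0 < r) (hrR : r ≤ R) :
    ∫ x in {x | 0 < ℓ x} ∩ (closedBall c R \ ball c r), 1 / dist x c ^ Module.finrank ℝ E ∂μ =
      Module.finrank ℝ E * μ.real (ball 0 1) * Real.log (R / r) / 2 := by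
  set d := Module.finrank ℝ E
  have hH : MeasurableSet {x | 0 < ℓ x} := measurableSet_lt measurable_const ℓ.measurable
  have hvol : ∀ s, 0 ≤ s → ∫ x in {x | 0 < ℓ x} ∩ closedBall c s, (1 : ℝ) ∂μ =
      s ^ d * μ.real (ball 0 1) / 2 := fun s hs => by
    rw [setIntegral_const, addHaar_real_halfSpace_inter_closedBall μ hℓ hc hs, smul_eq_mul,
      mul_one]
  have hfin : μ ({x | 0 < ℓ x} ∩ closedBall c R) ≠ ⊤ :=
    ((measure_mono inter_subset_right).trans_lt measure_closedBall_lt_top).ne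
  rw [setIntegral_div_dist_pow_eq d hH hr (Measure.addHaar_sphere_of_ne_zero μ c hr.ne') hrR
    (integrableOn_const hfin), hvol R (hr.le.trans hrR), hvol r hr.le,
    intervalIntegral.integral_congr (g := fun s => μ.real (ball 0 1) / 2 * s⁻¹) fun s hs => ?_,
    intervalIntegral.integral_const_mul, integral_inv_of_pos hr (hr.trans_le hrR)]
  · have hR : R ≠ 0 := (hr.trans_le hrR).ne'
    field_simp
    ring
  · rw [uIcc_of_le hrR] at hs
    have hs0 : s ≠ 0 := (hr.trans_le hs.1).ne'
    rw [hvol s (hr.le.trans hs.1)]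
    field_simp
    ring

theorem setIntegral_div_dist_pow_finrank_halfSpace (hℓ : ℓ ≠ 0) (hc : ℓ c = 0) {r R : ℝ}
    (hr : 0 < r) (hrR : r ≤ R) {h : E → ℝ}
    (hh : IntegrableOn h ({x | 0 < ℓ x} ∩ closedBall c R) μ) :
    ∫ x in {x | 0 < ℓ x} ∩ (closedBall c R \ ball c r), h x / dist x c ^ Module.finrank ℝ E ∂μ =
      (∫ x in {x | 0 < ℓ x} ∩ closedBall c R, (h x - 1) ∂μ) / R ^ Module.finrank ℝ E -
        (∫ x in {x | 0 < ℓ x} ∩ closedBall c r, (h x - 1) ∂μ) / r ^ Module.finrank ℝ E +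
        Module.finrank ℝ E * (∫ s in r..R,
          (∫ x in {x | 0 < ℓ x} ∩ closedBall c s, (h x - 1) ∂μ) / s ^ (Module.finrank ℝ E + 1)) +
        Module.finrank ℝ E * μ.real (ball 0 1) * Real.log (R / r) / 2 := by
  have hH : MeasurableSet {x | 0 < ℓ x} := measurableSet_lt measurable_const ℓ.measurable
  have hfin : μ ({x | 0 < ℓ x} ∩ closedBall c R) ≠ ⊤ :=
    ((measure_mono inter_subset_right).trans_lt measure_closedBall_lt_top).ne
  have hh₁ : IntegrableOn (fun x => h x - 1) ({x | 0 < ℓ x} ∩ closedBall c R) μ :=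
    hh.sub (integrableOn_const hfin)
  have hannulus :
      {x | 0 < ℓ x} ∩ (closedBall c R \ ball c r) ⊆ {x | 0 < ℓ x} ∩ closedBall c R :=
    inter_subset_inter_right _ sdiff_subset
  rw [← setIntegral_one_div_dist_pow_finrank_halfSpace μ hℓ hc hr hrR,
    ← setIntegral_div_dist_pow_eq _ hH hr (Measure.addHaar_sphere_of_ne_zero μ c hr.ne') hrR hh₁,
    ← integral_add (IntegrableOn.div_dist_pow hH hr (hh₁.mono_set hannulus) _)
      (IntegrableOn.div_dist_pow hH hr ((integrableOn_const hfin).mono_set hannulus) _)]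
  refine setIntegral_congr_fun (hH.inter (measurableSet_closedBall.diff measurableSet_ball))
    fun x _ => ?_
  ring

end HalfSpace

theorem EuclideanSpace.proj_ne_zero {ι 𝕜 : Type*} [RCLike 𝕜] (i : ι) :
    EuclideanSpace.proj (𝕜 := 𝕜) i ≠ 0 := fun h => by
  classical
  simpa using congr($h (EuclideanSpace.single i (1 : 𝕜)))

theorem semiring_eq (n : ℕ) (hn : 2 ≤ n) (x₀ : EuclideanSpace ℝ (Fin n)) (r R : ℝ) :
    semiring n hn x₀ r R =
      {x | 0 < EuclideanSpace.proj (𝕜 := ℝ) (⟨n - 1, by omega⟩ : Fin n) x} ∩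
        (closedBall x₀ R \ ball x₀ r) := by
  ext x
  simp only [semiring, mem_ofPred_eq, mem_inter_iff, mem_sdiff, mem_closedBall, mem_ball,
    not_lt, dist_eq_norm, EuclideanSpace.coe_proj]
  tauto

theorem setIntegral_semiring_div_norm_pow (n : ℕ) (hn : 2 ≤ n) {t : EuclideanSpace ℝ (Fin n)}
    (ht : t ⟨n - 1, by omega⟩ = 0) {r R : ℝ} (hr : 0 < r) (hrR : r ≤ R)
    {g : EuclideanSpace ℝ (Fin n) → ℝ} (hg : IntegrableOn g (semiring n hn t 0 R)) :
    ∫ x in semiring n hn t r R, g x / ‖x - t‖ ^ n =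
      (∫ x in semiring n hn t 0 R, (g x - 1)) / R ^ n -
        (∫ x in semiring n hn t 0 r, (g x - 1)) / r ^ n +
        n * (∫ s in r..R, (∫ x in semiring n hn t 0 s, (g x - 1)) / s ^ (n + 1)) +
        n * (volume (ball (0 : EuclideanSpace ℝ (Fin n)) 1)).toReal * Real.log (R / r) / 2 := by
  rw [semiring_eq, ball_zero, sdiff_empty] at hg
  have key := setIntegral_div_dist_pow_finrank_halfSpace volume
    (EuclideanSpace.proj_ne_zero _) ht hr hrR hg
  rw [finrank_euclideanSpace_fin] at key
  simp only [dist_eq_norm] at key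
  simp only [semiring_eq, ball_zero, sdiff_empty]
  exact key

theorem mean_dilatation_identity (n : ℕ) (hn : 2 ≤ n)
    (t : EuclideanSpace ℝ (Fin n)) (ht : t ⟨n - 1, by omega⟩ = 0)
    (r R : ℝ) (hr : 0 < r) (hR : r < R)
    (g : EuclideanSpace ℝ (Fin n) → ℝ)
    (hgi : IntegrableOn g (semiring n hn t 0 R))
    (ω : ℝ → ℝ)
    (hω : ∀ s, 0 < s → s ≤ R → ω s =
      (2 / ((volume (ball (0 : EuclideanSpace ℝ (Fin n)) 1)).toReal * s ^ n)) *
        ∫ x in semiring n hn t 0 s, (g x - 1))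
    (P : ℝ)
    (hP : P = (2 / (((n : ℝ) *
        (volume (ball (0 : EuclideanSpace ℝ (Fin n)) 1)).toReal) *
          Real.log (R / r))) *
      ∫ x in semiring n hn t r R, g x / ‖x - t‖ ^ n) :
    (P - 1) * Real.log (R / r) = (ω R - ω r) / n + ∫ s in r..R, ω s / s := by
  set Ω := (volume (ball (0 : EuclideanSpace ℝ (Fin n)) 1)).toReal
  set F := fun s => ∫ x in semiring n hn t 0 s, (g x - 1)
  have hΩ : 0 < Ω :=
    ENNReal.toReal_pos (measure_ball_pos volume 0 one_pos).ne' measure_ball_lt_top.ne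
  have hlog : 0 < Real.log (R / r) := Real.log_pos ((one_lt_div hr).2 hR)
  have hn0 : (0 : ℝ) < n := by exact_mod_cast (by omega : 0 < n)
  have hR0 : 0 < R := hr.trans hR
  have hωint : ∫ s in r..R, ω s / s = 2 / Ω * ∫ s in r..R, F s / s ^ (n + 1) := by
    rw [← intervalIntegral.integral_const_mul]
    refine intervalIntegral.integral_congr fun s hs => ?_
    rw [uIcc_of_le hR.le] at hs
    have hs0 : s ≠ 0 := (hr.trans_le hs.1).ne'
    rw [hω s (hr.trans_le hs.1) hs.2]
    field_simp
    ring
  rw [hP, setIntegral_semiring_div_norm_pow n hn ht hr hR.le hgi, hω R hR0 le_rfl,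
    hω r hr hR.le, hωint]
  field_simp
  ring
end

section
/- Let n ≥ 2, let f : ℝⁿ → ℝⁿ be differentiable at a point x with invertible derivative A = f′(x) (so x is a regular point of f). Then the linear dilatation of f at x equals the linear dilatation coefficient of A: lim_{r→0⁺} L(x,r)/l(x,r) = ‖A‖/l(A), where L(x,r) = sup_{|y−x|=r} |f(y) − f(x)| and l(x,r) = inf_{|y−x|=r} |f(y) − f(x)|. -/
open Metric Filter

/-! On the sphere of radius `r` about `x`, `‖f y - f x‖` differs from `‖A (y - x)‖` by `o(r)`
uniformly in `y`, so the supremum and the infimum of `‖f y - f x‖` over that sphere are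
`r ‖A‖ + o(r)` and `r l(A) + o(r)`. Since `A` is injective, `l(A) > 0` by compactness of the unit
sphere, and the quotient tends to `‖A‖ / l(A)`. -/

open Topology Pointwise

section UniformlyClose

variable {α : Type*} {s : Set α} {u v : α → ℝ} {ε : ℝ}

theorem abs_csSup_image_sub_csSup_image_le (hs : s.Nonempty) (hv : BddAbove (v '' s))
    (huv : ∀ y ∈ s, |u y - v y| ≤ ε) : |sSup (u '' s) - sSup (v '' s)| ≤ ε := by
  have hv_le : ∀ y ∈ s, v y ≤ sSup (v '' s) := fun y hy => le_csSup hv ⟨y, hy, rfl⟩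
  have hu_le : ∀ y ∈ s, u y ≤ sSup (v '' s) + ε := fun y hy => by
    linarith [(abs_le.1 (huv y hy)).2, hv_le y hy]
  have hu : BddAbove (u '' s) := ⟨_, Set.forall_mem_image.2 hu_le⟩
  have hsup_u : sSup (u '' s) ≤ sSup (v '' s) + ε :=
    csSup_le (hs.image u) (Set.forall_mem_image.2 hu_le)
  have hsup_v : sSup (v '' s) ≤ sSup (u '' s) + ε :=
    csSup_le (hs.image v) <| Set.forall_mem_image.2 fun y hy => by
      linarith [(abs_le.1 (huv y hy)).1, le_csSup hu ⟨y, hy, rfl⟩]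
  exact abs_sub_le_iff.2 ⟨by linarith, by linarith⟩

theorem abs_csInf_image_sub_csInf_image_le (hs : s.Nonempty) (hv : BddBelow (v '' s))
    (huv : ∀ y ∈ s, |u y - v y| ≤ ε) : |sInf (u '' s) - sInf (v '' s)| ≤ ε := by
  have hv_ge : ∀ y ∈ s, sInf (v '' s) ≤ v y := fun y hy => csInf_le hv ⟨y, hy, rfl⟩
  have hu_ge : ∀ y ∈ s, sInf (v '' s) - ε ≤ u y := fun y hy => by
    linarith [(abs_le.1 (huv y hy)).1, hv_ge y hy]
  have hu : BddBelow (u '' s) := ⟨_, Set.forall_mem_image.2 hu_ge⟩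
  have hinf_u : sInf (v '' s) - ε ≤ sInf (u '' s) :=
    le_csInf (hs.image u) (Set.forall_mem_image.2 hu_ge)
  have hinf_v : sInf (u '' s) - ε ≤ sInf (v '' s) :=
    le_csInf (hs.image v) <| Set.forall_mem_image.2 fun y hy => by
      linarith [(abs_le.1 (huv y hy)).2, csInf_le hu ⟨y, hy, rfl⟩]
  exact abs_sub_le_iff.2 ⟨by linarith, by linarith⟩

end UniformlyClose

theorem tendsto_div_nhdsGT_zero_of_abs_sub_mul_le {g : ℝ → ℝ} {L : ℝ}
    (hg : ∀ ε > 0, ∀ᶠ r in 𝓝[>] 0, |g r - r * L| ≤ ε * r) :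
    Tendsto (fun r => g r / r) (𝓝[>] 0) (𝓝 L) := by
  rw [Metric.tendsto_nhds]
  intro ε hε
  filter_upwards [hg (ε / 2) (half_pos hε), self_mem_nhdsWithin] with r hle (hr : 0 < r)
  rw [Real.dist_eq]
  calc |g r / r - L| = |g r - r * L| / r := by
        rw [← abs_of_pos hr, ← abs_div, abs_of_pos hr, sub_div, mul_div_cancel_left₀ _ hr.ne']
    _ ≤ ε / 2 := by rwa [div_le_iff₀ hr]
    _ < ε := half_lt_self hε

section Dilatation

variable {E F : Type*} [NormedAddCommGroup E] [NormedSpace ℝ E] [NormedAddCommGroup F]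
  [NormedSpace ℝ F]

theorem ContinuousLinearMap.image_norm_apply_sub_sphere (A : E →L[ℝ] F) (x : E) {r : ℝ}
    (hr : 0 < r) :
    (fun y => ‖A (y - x)‖) '' sphere x r = r • ((fun h => ‖A h‖) '' sphere 0 1) := by
  have hsphere : sphere x r = (fun h => x + r • h) '' sphere 0 1 := by
    rw [← Set.image_image (x + ·), Set.image_smul, smul_sphere' hr.ne']
    simp [abs_of_pos hr]
  rw [hsphere, Set.image_image, ← Set.image_smul, Set.image_image]
  simp [norm_smul, abs_of_pos hr]

theorem HasFDerivAt.eventually_abs_norm_sub_norm_le {f : E → F} {A : E →L[ℝ] F} {x : E}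
    (hA : HasFDerivAt f A x) {ε : ℝ} (hε : 0 < ε) :
    ∀ᶠ r in 𝓝[>] 0, ∀ y ∈ sphere x r, |‖f y - f x‖ - ‖A (y - x)‖| ≤ ε * r := by
  obtain ⟨δ, hδ, hball⟩ := Metric.eventually_nhds_iff_ball.1 (hA.isLittleO.def hε)
  filter_upwards [Ioo_mem_nhdsGT hδ] with r hr y hy
  rw [mem_sphere_iff_norm] at hy
  calc |‖f y - f x‖ - ‖A (y - x)‖| ≤ ‖f y - f x - A (y - x)‖ := abs_norm_sub_norm_le _ _
    _ ≤ ε * r := hy ▸ hball y (mem_ball_iff_norm.2 (hy ▸ hr.2))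

variable [Nontrivial E] {f : E → F} {A : E →L[ℝ] F} {x : E}

theorem HasFDerivAt.tendsto_sSup_norm_sub_sphere_div (hA : HasFDerivAt f A x) :
    Tendsto (fun r => sSup ((fun y => ‖f y - f x‖) '' sphere x r) / r) (𝓝[>] 0) (𝓝 ‖A‖) := by
  refine tendsto_div_nhdsGT_zero_of_abs_sub_mul_le fun ε hε => ?_
  filter_upwards [hA.eventually_abs_norm_sub_norm_le hε, self_mem_nhdsWithin]
    with r hclose (hr : 0 < r)
  have hbdd : BddAbove ((fun y => ‖A (y - x)‖) '' sphere x r) :=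
    ⟨‖A‖ * r, Set.forall_mem_image.2 fun y hy => mem_sphere_iff_norm.1 hy ▸ A.le_opNorm (y - x)⟩
  have hsup := abs_csSup_image_sub_csSup_image_le (NormedSpace.sphere_nonempty.2 hr.le) hbdd hclose
  rwa [A.image_norm_apply_sub_sphere x hr, Real.sSup_smul_of_nonneg hr.le,
    A.sSup_sphere_eq_norm, smul_eq_mul] at hsup

theorem HasFDerivAt.tendsto_sInf_norm_sub_sphere_div (hA : HasFDerivAt f A x) :
    Tendsto (fun r => sInf ((fun y => ‖f y - f x‖) '' sphere x r) / r) (𝓝[>] 0)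
      (𝓝 (sInf ((fun h => ‖A h‖) '' sphere 0 1))) := by
  refine tendsto_div_nhdsGT_zero_of_abs_sub_mul_le fun ε hε => ?_
  filter_upwards [hA.eventually_abs_norm_sub_norm_le hε, self_mem_nhdsWithin]
    with r hclose (hr : 0 < r)
  have hbdd : BddBelow ((fun y => ‖A (y - x)‖) '' sphere x r) :=
    ⟨0, Set.forall_mem_image.2 fun _ _ => norm_nonneg _⟩
  have hinf := abs_csInf_image_sub_csInf_image_le (NormedSpace.sphere_nonempty.2 hr.le) hbdd hclose
  rwa [A.image_norm_apply_sub_sphere x hr, Real.sInf_smul_of_nonneg hr.le, smul_eq_mul] at hinf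

theorem ContinuousLinearMap.sInf_norm_image_sphere_pos [ProperSpace E]
    (hA : Function.Injective A) : 0 < sInf ((fun h => ‖A h‖) '' sphere 0 1) := by
  obtain ⟨h, hh, hmin⟩ := ((isCompact_sphere (0 : E) 1).image (f := fun h => ‖A h‖)
    (by fun_prop)).sInf_mem ((NormedSpace.sphere_nonempty.2 zero_le_one).image _)
  rw [← hmin, norm_pos_iff]
  exact (map_ne_zero_iff A hA).2 (ne_zero_of_mem_unit_sphere ⟨h, hh⟩)

end Dilatation

theorem linear_dilatation_at_regular_point_general (n : ℕ)
    (f : EuclideanSpace ℝ (Fin n) → EuclideanSpace ℝ (Fin n))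
    (x : EuclideanSpace ℝ (Fin n))
    (A : EuclideanSpace ℝ (Fin n) →L[ℝ] EuclideanSpace ℝ (Fin n))
    (hA : HasFDerivAt f A x)
    (hdet : LinearMap.det
      (A : EuclideanSpace ℝ (Fin n) →ₗ[ℝ] EuclideanSpace ℝ (Fin n)) ≠ 0) :
    Tendsto (fun r : ℝ =>
        sSup ((fun y => ‖f y - f x‖) '' sphere x r) /
          sInf ((fun y => ‖f y - f x‖) '' sphere x r))
      (nhdsWithin 0 (Set.Ioi 0)) (nhds (‖A‖ / minNorm n A)) := by
  rcases subsingleton_or_nontrivial (EuclideanSpace ℝ (Fin n)) with hE | hE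
  -- `n = 0`: spheres of positive radius are empty and both sides are `0 / 0 = 0`.
  · rw [Subsingleton.elim A 0, norm_zero, zero_div]
    refine tendsto_const_nhds.congr' ?_
    filter_upwards [self_mem_nhdsWithin] with r (hr : 0 < r)
    simp [sphere_eq_empty_of_subsingleton hr.ne']
  have hinj : Function.Injective A := (LinearMap.equivOfDetNeZero _ hdet).injective
  refine (hA.tendsto_sSup_norm_sub_sphere_div.div hA.tendsto_sInf_norm_sub_sphere_div
    (A.sInf_norm_image_sphere_pos hinj).ne').congr' ?_
  filter_upwards [self_mem_nhdsWithin] with r (hr : 0 < r)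
  exact div_div_div_cancel_right₀ hr.ne' _ _

theorem linear_dilatation_at_regular_point (n : ℕ) (hn : 2 ≤ n)
    (f : EuclideanSpace ℝ (Fin n) → EuclideanSpace ℝ (Fin n))
    (x : EuclideanSpace ℝ (Fin n))
    (A : EuclideanSpace ℝ (Fin n) →L[ℝ] EuclideanSpace ℝ (Fin n))
    (hA : HasFDerivAt f A x)
    (hdet : LinearMap.det
      (A : EuclideanSpace ℝ (Fin n) →ₗ[ℝ] EuclideanSpace ℝ (Fin n)) ≠ 0) :
    Tendsto (fun r : ℝ =>
        sSup ((fun y => ‖f y - f x‖) '' sphere x r) /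
          sInf ((fun y => ‖f y - f x‖) '' sphere x r))
      (nhdsWithin 0 (Set.Ioi 0)) (nhds (‖A‖ / minNorm n A)) :=
  linear_dilatation_at_regular_point_general n f x A hA hdet
end
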